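/- Let A_1,…,A_N be real d×d matrices and define L(U) = Σ_{n=1}^N ‖low(Uᵀ A_n U)‖² for orthogonal U. Then for every orthogonal U and every skew-symmetric X, the directional derivative satisfies d/dt L(U e^{tX})|_{t=0} = Tr(Xᵀ (S − Sᵀ)), where S = Σ_{n=1}^N [Uᵀ A_nᵀ U, low(Uᵀ A_n U)] and [A,B] = AB − BA. In particular, U is a stationary point of L on the orthogonal group if and only if S = Sᵀ. -/

import Mathlib

open Matrix Kronecker BigOperators

noncomputable section

/-- Square real matrices. -/
abbrev Mat (d : ℕ) := Matrix (Fin d) (Fin d) ℝ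

/-- Strictly lower-triangular part: `[low A]_{ij} = A_{ij}` if `i > j`, else `0`. -/
def lowPart {d : ℕ} (A : Mat d) : Mat d :=
  Matrix.of fun i j => if (j : ℕ) < (i : ℕ) then A i j else 0

/-- Frobenius norm. -/
def frob {m n : Type*} [Fintype m] [Fintype n] (A : Matrix m n ℝ) : ℝ :=
  Real.sqrt (∑ i, ∑ j, (A i j) ^ 2)

/-- Euclidean norm of a vector. -/
def euclNorm {m : Type*} [Fintype m] (v : m → ℝ) : ℝ :=
  Real.sqrt (∑ i, (v i) ^ 2)

/-- Largest singular value. -/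
def sigMax {m n : Type*} [Fintype m] [Fintype n] (A : Matrix m n ℝ) : ℝ :=
  sSup {r | ∃ x : n → ℝ, euclNorm x = 1 ∧ r = euclNorm (A.mulVec x)}

/-- Smallest singular value. -/
def sigMin {m n : Type*} [Fintype m] [Fintype n] (A : Matrix m n ℝ) : ℝ :=
  sInf {r | ∃ x : n → ℝ, euclNorm x = 1 ∧ r = euclNorm (A.mulVec x)}

/-- Spectral norm (largest singular value). -/
def specNorm {m n : Type*} [Fintype m] [Fintype n] (A : Matrix m n ℝ) : ℝ := sigMax A

/-- Condition number `κ(A) = σ_max(A)/σ_min(A)`. -/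
def condNum {m n : Type*} [Fintype m] [Fintype n] (A : Matrix m n ℝ) : ℝ :=
  sigMax A / sigMin A

/-- Matrix exponential. -/
def matExp {d : ℕ} (A : Mat d) : Mat d := ∑' k : ℕ, ((k.factorial : ℝ))⁻¹ • A ^ k

/-- Column-wise vectorization: index `(j, i)` holds the `(i, j)` entry. -/
def vecM {d : ℕ} (A : Mat d) : Fin d × Fin d → ℝ := fun p => A p.2 p.1

/-- Inverse of the column-wise vectorization. -/
def matM {d : ℕ} (v : Fin d × Fin d → ℝ) : Mat d := Matrix.of fun i j => v (j, i)

/-- The `d² × d²` diagonal 0/1 matrix `Low` with `Low (vec A) = vec (low A)`. -/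
def lowOp (d : ℕ) : Matrix (Fin d × Fin d) (Fin d × Fin d) ℝ :=
  Matrix.diagonal fun p => if (p.1 : ℕ) < (p.2 : ℕ) then 1 else 0

/-- `P` is a valid `P_low` projector: `P Pᵀ = 1` and `Pᵀ P = Low`. -/
def IsPlow {d k : ℕ} (P : Matrix (Fin k) (Fin d × Fin d) ℝ) : Prop :=
  P * Pᵀ = 1 ∧ Pᵀ * P = lowOp d

/-- Orthogonal matrix. -/
def IsOrtho {d : ℕ} (U : Mat d) : Prop := Uᵀ * U = 1

/-- Skew-symmetric matrix. -/
def IsSkew {d : ℕ} (X : Mat d) : Prop := Xᵀ = -X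

/-- Matrix commutator. -/
def mcomm {d : ℕ} (A B : Mat d) : Mat d := A * B - B * A

/-- `U₀` is an exact joint triangularizer of the family `M`. -/
def ExactTriang {d N : ℕ} (U₀ : Mat d) (M : Fin N → Mat d) : Prop :=
  IsOrtho U₀ ∧ ∀ n, lowPart (U₀ᵀ * M n * U₀) = 0

/-- The joint triangularization loss `L(U) = Σₙ ‖low(Uᵀ M̂ₙ U)‖²`. -/
def Loss {d N : ℕ} (Mh : Fin N → Mat d) (U : Mat d) : ℝ :=
  ∑ n, (frob (lowPart (Uᵀ * Mh n * U))) ^ 2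

/-- Stationary point of the loss on the orthogonal group: the Riemannian
gradient vanishes, i.e. all directional derivatives along skew directions vanish. -/
def IsStationaryLoss {d N : ℕ} (Mh : Fin N → Mat d) (U : Mat d) : Prop :=
  IsOrtho U ∧ ∀ X : Mat d, IsSkew X →
    deriv (fun t : ℝ => Loss Mh (U * matExp (t • X))) 0 = 0

/-- The operator `t̃ = P_low (1 ⊗ Aᵀ − A ⊗ 1) P_lowᵀ`. -/
def ttil {d k : ℕ} (P : Matrix (Fin k) (Fin d × Fin d) ℝ) (A : Mat d) :
    Matrix (Fin k) (Fin k) ℝ :=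
  P * ((1 : Mat d) ⊗ₖ Aᵀ - A ⊗ₖ (1 : Mat d)) * Pᵀ

/-- The joint eigengap `γ = min_{i<i'} Σₙ (Λ_{ni} − Λ_{ni'})²`. -/
def gapMin {d N : ℕ} (Λ : Fin N → Fin d → ℝ) : ℝ :=
  sInf {r | ∃ i i' : Fin d, i < i' ∧ r = ∑ n, (Λ n i - Λ n i') ^ 2}

/-!
Write `Mₙ = Uᵀ Aₙ U`. Along `t ↦ U e^{tX}` the conjugated matrices are `e^{tX}ᵀ Mₙ e^{tX}`,
with velocity `Xᵀ Mₙ + Mₙ X` at `t = 0`, so the loss has derivative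
`Σₙ 2 ⟨low Mₙ, Xᵀ Mₙ + Mₙ X⟩` (`low` is an orthogonal projection). Cyclicity of the trace
turns each term into `2 ⟨X, [Mₙᵀ, low Mₙ]⟩`, and for skew `X` one has `2 ⟨X, S⟩ = ⟨X, S − Sᵀ⟩`.
Testing stationarity with the skew direction `X = S − Sᵀ` gives `‖S − Sᵀ‖² = 0`.
-/

section Calculus

-- Any normed-algebra structure serves for `exp`; its topology is the product one, so the
-- resulting derivatives are the entrywise ones.
attribute [local instance] Matrix.linftyOpNormedRing Matrix.linftyOpNormedAlgebra

theorem matExp_eq_exp {d : ℕ} (A : Mat d) : matExp A = NormedSpace.exp A := by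
  rw [NormedSpace.exp_eq_tsum ℝ]; rfl

theorem hasDerivAt_matExp_smul {d : ℕ} (X : Mat d) :
    HasDerivAt (fun t : ℝ => matExp (t • X)) X 0 := by
  have h := hasDerivAt_exp_smul_const (𝕂 := ℝ) X 0
  simp only [zero_smul, NormedSpace.exp_zero, one_mul] at h
  simp only [matExp_eq_exp]
  exact h

theorem hasDerivAt_transpose_mul_mul_matExp {d : ℕ} (M X : Mat d) :
    HasDerivAt (fun t : ℝ => (matExp (t • X))ᵀ * M * matExp (t • X))
      (Xᵀ * M + M * X) 0 := by
  have hE := hasDerivAt_matExp_smul X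
  have hEt : HasDerivAt (fun t : ℝ => (matExp (t • X))ᵀ) Xᵀ 0 :=
    hasDerivAt_pi.2 fun i => hasDerivAt_pi.2 fun j => hasDerivAt_pi.1 (hasDerivAt_pi.1 hE j) i
  have h := (hEt.mul_const M).mul hE
  simp only [zero_smul, matExp_eq_exp, NormedSpace.exp_zero, transpose_one, one_mul,
    mul_one] at h ⊢
  exact h

end Calculus

theorem matExp_zero {d : ℕ} : matExp (0 : Mat d) = 1 := by
  simp [matExp_eq_exp]

theorem HasDerivAt.lowPart_apply {d : ℕ} {f : ℝ → Mat d} {f' : Mat d} {t : ℝ}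
    (hf : HasDerivAt f f' t) (i j : Fin d) :
    HasDerivAt (fun s => lowPart (f s) i j) (lowPart f' i j) t := by
  simp only [lowPart, of_apply]
  split_ifs
  · exact hasDerivAt_pi.1 (hasDerivAt_pi.1 hf i) j
  · exact hasDerivAt_const t 0

theorem frob_sq {m n : Type*} [Fintype m] [Fintype n] (A : Matrix m n ℝ) :
    frob A ^ 2 = ∑ i, ∑ j, A i j ^ 2 :=
  Real.sq_sqrt (by positivity)

theorem trace_transpose_lowPart_mul {d : ℕ} (L D : Mat d) :
    trace ((lowPart L)ᵀ * D) = ∑ i, ∑ j, lowPart L i j * lowPart D i j := by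
  simp only [trace, diag, mul_apply, transpose_apply, lowPart, of_apply]
  rw [Finset.sum_comm]
  refine Finset.sum_congr rfl fun i _ => Finset.sum_congr rfl fun j _ => ?_
  split_ifs <;> simp

theorem loss_mul {d N : ℕ} (A : Fin N → Mat d) (U V : Mat d) :
    Loss A (U * V) = ∑ n, frob (lowPart (Vᵀ * (Uᵀ * A n * U) * V)) ^ 2 := by
  simp only [Loss, transpose_mul, Matrix.mul_assoc]

theorem hasDerivAt_loss_mul_matExp {d N : ℕ} (A : Fin N → Mat d) (U X : Mat d) :
    HasDerivAt (fun t : ℝ => Loss A (U * matExp (t • X)))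
      (∑ n, 2 * trace ((lowPart (Uᵀ * A n * U))ᵀ *
        (Xᵀ * (Uᵀ * A n * U) + (Uᵀ * A n * U) * X))) 0 := by
  have h n i j :=
    ((hasDerivAt_transpose_mul_mul_matExp (Uᵀ * A n * U) X).lowPart_apply i j).fun_pow 2
  simp only [zero_smul, matExp_zero, transpose_one, one_mul, mul_one] at h
  simp only [loss_mul, frob_sq, trace_transpose_lowPart_mul, Finset.mul_sum]
  refine HasDerivAt.fun_sum fun n _ => HasDerivAt.fun_sum fun i _ =>
    HasDerivAt.fun_sum fun j _ => (h n i j).congr_deriv ?_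
  ring

section Skew

variable {d : ℕ} {X : Mat d}

theorem trace_transpose_mul_transpose_of_isSkew (hX : IsSkew X) (Y : Mat d) :
    trace (Xᵀ * Yᵀ) = -trace (Xᵀ * Y) := by
  rw [trace_transpose_mul, hX, Matrix.neg_mul, trace_neg, neg_neg]

theorem trace_transpose_mul_sub_transpose_of_isSkew (hX : IsSkew X) (C : Mat d) :
    trace (Xᵀ * (C - Cᵀ)) = 2 * trace (Xᵀ * C) := by
  rw [Matrix.mul_sub, trace_sub, trace_transpose_mul_transpose_of_isSkew hX]
  ring

theorem trace_transpose_mul_add_of_isSkew (hX : IsSkew X) (M L : Mat d) :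
    trace (Lᵀ * (Xᵀ * M + M * X)) = trace (Xᵀ * mcomm Mᵀ L) := by
  have hXM : trace (Lᵀ * (Xᵀ * M)) = -trace (Xᵀ * (L * Mᵀ)) := by
    rw [← trace_transpose_mul_transpose_of_isSkew hX, transpose_mul, transpose_transpose,
      trace_mul_comm, Matrix.mul_assoc]
  have hMX : trace (Lᵀ * (M * X)) = trace (Xᵀ * (Mᵀ * L)) := by
    rw [← trace_transpose, transpose_mul, transpose_mul, transpose_transpose, Matrix.mul_assoc]
  rw [Matrix.mul_add, trace_add, hXM, hMX, mcomm, Matrix.mul_sub, trace_sub]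
  ring

end Skew

theorem eq_zero_of_trace_transpose_mul_self {m n : Type*} [Fintype m] [Fintype n]
    {B : Matrix m n ℝ} (h : trace (Bᵀ * B) = 0) : B = 0 := by
  rwa [← conjTranspose_eq_transpose_of_trivial, trace_conjTranspose_mul_self_eq_zero_iff] at h

def lossCommutator {d N : ℕ} (A : Fin N → Mat d) (U : Mat d) : Mat d :=
  ∑ n, mcomm (Uᵀ * (A n)ᵀ * U) (lowPart (Uᵀ * A n * U))

theorem deriv_loss_mul_matExp {d N : ℕ} (A : Fin N → Mat d) (U : Mat d) {X : Mat d}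
    (hX : IsSkew X) :
    deriv (fun t : ℝ => Loss A (U * matExp (t • X))) 0 =
      trace (Xᵀ * (lossCommutator A U - (lossCommutator A U)ᵀ)) := by
  have hconj n : Uᵀ * (A n)ᵀ * U = (Uᵀ * A n * U)ᵀ := by
    simp only [transpose_mul, transpose_transpose, Matrix.mul_assoc]
  rw [(hasDerivAt_loss_mul_matExp A U X).deriv, trace_transpose_mul_sub_transpose_of_isSkew hX,
    lossCommutator, Matrix.mul_sum, trace_sum, Finset.mul_sum]
  simp only [hconj, trace_transpose_mul_add_of_isSkew hX]

theorem isStationaryLoss_iff {d N : ℕ} (A : Fin N → Mat d) {U : Mat d} (hU : IsOrtho U) :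
    IsStationaryLoss A U ↔ lossCommutator A U = (lossCommutator A U)ᵀ := by
  set S := lossCommutator A U
  constructor
  · rintro ⟨-, hcrit⟩
    have hskew : IsSkew (S - Sᵀ) := by rw [IsSkew, transpose_sub, transpose_transpose, neg_sub]
    have h0 := hcrit _ hskew
    rw [deriv_loss_mul_matExp A U hskew] at h0
    exact sub_eq_zero.1 (eq_zero_of_trace_transpose_mul_self h0)
  · intro hS
    refine ⟨hU, fun X hX => ?_⟩
    rw [deriv_loss_mul_matExp A U hX, sub_eq_zero_of_eq hS, Matrix.mul_zero, trace_zero]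

/-- the directional derivative of the loss along a skew direction
is `Tr(Xᵀ(S − Sᵀ))` with `S = Σₙ [Uᵀ Aₙᵀ U, low(Uᵀ Aₙ U)]`; in particular `U` is
a stationary point iff `S = Sᵀ`. -/
theorem loss_gradient_formula {d N : ℕ} (A : Fin N → Mat d) (U : Mat d)
    (hU : IsOrtho U) :
    (∀ X : Mat d, IsSkew X →
        deriv (fun t : ℝ => Loss A (U * matExp (t • X))) 0 =
          Matrix.trace (Xᵀ *
            ((∑ n, mcomm (Uᵀ * (A n)ᵀ * U) (lowPart (Uᵀ * A n * U))) -
              (∑ n, mcomm (Uᵀ * (A n)ᵀ * U) (lowPart (Uᵀ * A n * U)))ᵀ))) ∧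
    (IsStationaryLoss A U ↔
      (∑ n, mcomm (Uᵀ * (A n)ᵀ * U) (lowPart (Uᵀ * A n * U))) =
        (∑ n, mcomm (Uᵀ * (A n)ᵀ * U) (lowPart (Uᵀ * A n * U)))ᵀ) :=
  ⟨fun _ hX => deriv_loss_mul_matExp A U hX, isStationaryLoss_iff A hU⟩
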